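/- arXiv:1703.10426 — 6 statements merged into one kernel-verified Lean document; each statement's English description precedes it below -/
import Mathlib

section
/- Every internal category in the category of Leibniz algebras is an internal groupoid: for each g ∈ G the element g⁻¹ := ε(d₀(g)) - g + ε(d₁(g)) satisfies d₀(g⁻¹) = d₁(g), d₁(g⁻¹) = d₀(g), g ∘ g⁻¹ = ε(d₁(g)), and g⁻¹ ∘ g = ε(d₀(g)). -/
/-- A (right) Leibniz algebra structure on a `k`-vector space `L`: a bilinear
bracket satisfying the Leibniz identity `[x,[y,z]] = [[x,y],z] - [[x,z],y]`. -/
structure LeibnizBracket (k : Type*) (L : Type*) [Field k] [AddCommGroup L] [Module k L] where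
  br : L →ₗ[k] L →ₗ[k] L
  leibniz : ∀ x y z : L, br x (br y z) = br (br x y) z - br (br x z) y

/-- An internal category (= internal groupoid) in the category of Leibniz algebras:
Leibniz algebras `G` (morphisms) and `Ob` (objects), with structural maps
`d0, d1 : G → Ob`, `e : Ob → G` and a partial composition, all of which are
morphisms of Leibniz algebras (linear and bracket preserving), satisfying the
category axioms; being a morphism, the composition satisfies the interchange laws. -/
structure LeibnizInternalCat (k G Ob : Type*) [Field k] [AddCommGroup G] [Module k G]
    [AddCommGroup Ob] [Module k Ob] where
  BG : LeibnizBracket k G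
  BOb : LeibnizBracket k Ob
  d0 : G →ₗ[k] Ob
  d1 : G →ₗ[k] Ob
  e : Ob →ₗ[k] G
  d0e : ∀ x, d0 (e x) = x
  d1e : ∀ x, d1 (e x) = x
  d0br : ∀ g g', d0 (BG.br g g') = BOb.br (d0 g) (d0 g')
  d1br : ∀ g g', d1 (BG.br g g') = BOb.br (d1 g) (d1 g')
  ebr : ∀ x y, e (BOb.br x y) = BG.br (e x) (e y)
  /-- composition `h ∘ g`, defined when `d1 g = d0 h` -/
  comp : (h g : G) → d1 g = d0 h → G
  d0comp : ∀ h g hc, d0 (comp h g hc) = d0 g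
  d1comp : ∀ h g hc, d1 (comp h g hc) = d1 h
  comp_id : ∀ g (hc : d1 (e (d0 g)) = d0 g), comp g (e (d0 g)) hc = g
  id_comp : ∀ g (hc : d1 g = d0 (e (d1 g))), comp (e (d1 g)) g hc = g
  assoc : ∀ f h g hc1 hc2 hc3 hc4, comp f (comp h g hc1) hc2 = comp (comp f h hc3) g hc4
  add_comp : ∀ h g h' g' hc hc' hcc,
    comp (h + h') (g + g') hcc = comp h g hc + comp h' g' hc'
  smul_comp : ∀ (c : k) h g hc hcc, comp (c • h) (c • g) hcc = c • comp h g hc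
  br_comp : ∀ h g h' g' hc hc' hcc,
    comp (BG.br h h') (BG.br g g') hcc = BG.br (comp h g hc) (comp h' g' hc')

namespace LeibnizInternalCat

variable {k G Ob : Type*} [Field k] [AddCommGroup G] [Module k G] [AddCommGroup Ob] [Module k Ob]
  (C : LeibnizInternalCat k G Ob)

theorem zero_comp (g : G) (hc : C.d1 g = C.d0 0) : C.comp 0 g hc = g := by
  have hid : 0 = C.e (C.d1 g) := by rw [hc, map_zero, map_zero]
  convert C.id_comp g (by rw [C.d0e])

/-- The interchange law for the splitting `(h, g) = (h, ε (d₀ h)) + (0, g - ε (d₀ h))`. -/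
theorem comp_eq_sub_add (h g : G) (hc : C.d1 g = C.d0 h) : C.comp h g hc = h - C.e (C.d0 h) + g := by
  have hid : C.d1 (C.e (C.d0 h)) = C.d0 h := C.d1e _
  have hrest : C.d1 (g - C.e (C.d0 h)) = C.d0 0 := by rw [map_sub, hid, hc, sub_self, map_zero]
  have hsum : C.d1 (C.e (C.d0 h) + (g - C.e (C.d0 h))) = C.d0 (h + 0) := by
    rw [add_sub_cancel, add_zero, hc]
  calc C.comp h g hc = C.comp (h + 0) (C.e (C.d0 h) + (g - C.e (C.d0 h))) hsum := by
        congr 1 <;> abel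
    _ = h + (g - C.e (C.d0 h)) := by rw [C.add_comp _ _ _ _ hid hrest, C.comp_id, C.zero_comp]
    _ = h - C.e (C.d0 h) + g := by abel

end LeibnizInternalCat

/-- Every internal category in Leibniz algebras is an internal groupoid:
`g⁻¹ := ε(d₀ g) - g + ε(d₁ g)` is a two-sided inverse of `g`. -/
theorem internal_cat_is_groupoid (k G Ob : Type*) [Field k] [AddCommGroup G] [Module k G]
    [AddCommGroup Ob] [Module k Ob] (C : LeibnizInternalCat k G Ob) (g : G) :
    C.d0 (C.e (C.d0 g) - g + C.e (C.d1 g)) = C.d1 g ∧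
    C.d1 (C.e (C.d0 g) - g + C.e (C.d1 g)) = C.d0 g ∧
    (∀ hc : C.d1 (C.e (C.d0 g) - g + C.e (C.d1 g)) = C.d0 g,
      C.comp g (C.e (C.d0 g) - g + C.e (C.d1 g)) hc = C.e (C.d1 g)) ∧
    (∀ hc : C.d1 g = C.d0 (C.e (C.d0 g) - g + C.e (C.d1 g)),
      C.comp (C.e (C.d0 g) - g + C.e (C.d1 g)) g hc = C.e (C.d0 g)) := by
  have hd0 : C.d0 (C.e (C.d0 g) - g + C.e (C.d1 g)) = C.d1 g := by simp [C.d0e]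
  have hd1 : C.d1 (C.e (C.d0 g) - g + C.e (C.d1 g)) = C.d0 g := by simp [C.d1e]
  refine ⟨hd0, hd1, fun hc => ?_, fun hc => ?_⟩
  · rw [C.comp_eq_sub_add]
    abel
  · rw [C.comp_eq_sub_add, hd0]
    abel
end

section
/- Let G be an internal groupoid in the category of Leibniz algebras. If g₁ ∈ ker d₀ and g₂ ∈ ker d₁, then [g₁, g₂] = 0 and [g₂, g₁] = 0 in G. -/
/-!
Since `ε(0) = 0`, an arrow `g₁ ∈ ker d₀` factors as `g₁ ∘ 0` and an arrow `g₂ ∈ ker d₁` as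
`0 ∘ g₂`. The interchange law then gives `[g₁, g₂] = [g₁, 0] ∘ [0, g₂] = 0 ∘ 0 = 0`, and
symmetrically `[g₂, g₁] = [0, g₁] ∘ [g₂, 0] = 0`.
-/

namespace LeibnizInternalCat

variable {k G Ob : Type*} [Field k] [AddCommGroup G] [Module k G] [AddCommGroup Ob] [Module k Ob]
  (C : LeibnizInternalCat k G Ob)

theorem comp_congr {h g h' g' : G} {hc : C.d1 g = C.d0 h} {hc' : C.d1 g' = C.d0 h'}
    (eh : h = h') (eg : g = g') : C.comp h g hc = C.comp h' g' hc' := by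
  subst eh eg
  rfl

theorem comp_eq_zero {h g : G} {hc : C.d1 g = C.d0 h} (hh : h = 0) (hg : g = 0) :
    C.comp h g hc = 0 := by
  subst hh hg
  calc C.comp 0 0 hc = C.comp ((0 : k) • 0) ((0 : k) • 0) (by simp) :=
        C.comp_congr (zero_smul k _).symm (zero_smul k _).symm
    _ = 0 := by rw [C.smul_comp 0 0 0 hc, zero_smul]

theorem comp_zero_of_d0_eq_zero {g : G} (hg : C.d0 g = 0) (hc : C.d1 0 = C.d0 g) :
    C.comp g 0 hc = g :=
  (C.comp_congr rfl (by rw [hg, map_zero])).trans (C.comp_id g (C.d1e _))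

theorem zero_comp_of_d1_eq_zero {g : G} (hg : C.d1 g = 0) (hc : C.d1 g = C.d0 0) :
    C.comp 0 g hc = g :=
  (C.comp_congr (by rw [hg, map_zero]) rfl).trans (C.id_comp g (C.d0e _).symm)

variable {C}

theorem br_eq_zero_of_d0_eq_zero_of_d1_eq_zero {g₁ g₂ : G} (h₁ : C.d0 g₁ = 0)
    (h₂ : C.d1 g₂ = 0) : C.BG.br g₁ g₂ = 0 := by
  have hc₁ : C.d1 0 = C.d0 g₁ := by rw [h₁, map_zero]
  have hc₂ : C.d1 g₂ = C.d0 0 := by rw [h₂, map_zero]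
  calc C.BG.br g₁ g₂
      = C.BG.br (C.comp g₁ 0 hc₁) (C.comp 0 g₂ hc₂) := by
        rw [C.comp_zero_of_d0_eq_zero h₁, C.zero_comp_of_d1_eq_zero h₂]
    _ = C.comp (C.BG.br g₁ 0) (C.BG.br 0 g₂) (by simp) :=
        (C.br_comp g₁ 0 0 g₂ hc₁ hc₂ _).symm
    _ = 0 := C.comp_eq_zero (map_zero _) (by simp)

theorem br_eq_zero_of_d1_eq_zero_of_d0_eq_zero {g₁ g₂ : G} (h₁ : C.d1 g₁ = 0)
    (h₂ : C.d0 g₂ = 0) : C.BG.br g₁ g₂ = 0 := by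
  have hc₁ : C.d1 g₁ = C.d0 0 := by rw [h₁, map_zero]
  have hc₂ : C.d1 0 = C.d0 g₂ := by rw [h₂, map_zero]
  calc C.BG.br g₁ g₂
      = C.BG.br (C.comp 0 g₁ hc₁) (C.comp g₂ 0 hc₂) := by
        rw [C.zero_comp_of_d1_eq_zero h₁, C.comp_zero_of_d0_eq_zero h₂]
    _ = C.comp (C.BG.br 0 g₂) (C.BG.br g₁ 0) (by simp) :=
        (C.br_comp 0 g₁ g₂ 0 hc₁ hc₂ _).symm
    _ = 0 := C.comp_eq_zero (by simp) (map_zero _)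

end LeibnizInternalCat

/-- If `g₁ ∈ ker d₀` and `g₂ ∈ ker d₁` in an internal groupoid in Leibniz algebras,
then `[g₁, g₂] = [g₂, g₁] = 0`. -/
theorem br_ker_d0_ker_d1_eq_zero (k G Ob : Type*) [Field k] [AddCommGroup G] [Module k G]
    [AddCommGroup Ob] [Module k Ob] (C : LeibnizInternalCat k G Ob)
    (g1 g2 : G) (h1 : C.d0 g1 = 0) (h2 : C.d1 g2 = 0) :
    C.BG.br g1 g2 = 0 ∧ C.BG.br g2 g1 = 0 :=
  ⟨C.br_eq_zero_of_d0_eq_zero_of_d1_eq_zero h1 h2, C.br_eq_zero_of_d1_eq_zero_of_d0_eq_zero h2 h1⟩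
end

section
/- Let G be an internal groupoid in the category of Leibniz algebras. Then the maps Ob(G) × ker d₀ → ker d₀, (x,g) ↦ x·g := [ε(x), g] and ker d₀ × Ob(G) → ker d₀, (g,x) ↦ g·x := [g, ε(x)] define a Leibniz action of Ob(G) on ker d₀ satisfying the six action axioms. -/
namespace LeibnizInternalCat

variable {k G Ob : Type*} [Field k] [AddCommGroup G] [Module k G] [AddCommGroup Ob] [Module k Ob]
  (C : LeibnizInternalCat k G Ob)

theorem d0_br_eq_zero_of_right (a : G) {g : G} (hg : C.d0 g = 0) : C.d0 (C.BG.br a g) = 0 := by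
  rw [C.d0br, hg, map_zero]

theorem d0_br_eq_zero_of_left {g : G} (a : G) (hg : C.d0 g = 0) : C.d0 (C.BG.br g a) = 0 := by
  rw [C.d0br, hg, map_zero, LinearMap.zero_apply]

end LeibnizInternalCat

/-- The maps `x·g := [ε x, g]` and `g·x := [g, ε x]` define a Leibniz action of
`Ob(G)` on `ker d₀`: they land in `ker d₀` and satisfy the six action axioms. -/
theorem ob_acts_on_ker_d0 (k G Ob : Type*) [Field k] [AddCommGroup G] [Module k G]
    [AddCommGroup Ob] [Module k Ob] (C : LeibnizInternalCat k G Ob) :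
    (∀ (x : Ob) (g : G), C.d0 g = 0 → C.d0 (C.BG.br (C.e x) g) = 0) ∧
    (∀ (x : Ob) (g : G), C.d0 g = 0 → C.d0 (C.BG.br g (C.e x)) = 0) ∧
    -- (i)  x·[m,n] = [x·m,n] - [x·n,m]
    (∀ (x : Ob) (m n : G), C.d0 m = 0 → C.d0 n = 0 →
      C.BG.br (C.e x) (C.BG.br m n)
        = C.BG.br (C.BG.br (C.e x) m) n - C.BG.br (C.BG.br (C.e x) n) m) ∧
    -- (ii)  [m, x·n] = [m·x, n] - [m,n]·x
    (∀ (m : G) (x : Ob) (n : G), C.d0 m = 0 → C.d0 n = 0 →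
      C.BG.br m (C.BG.br (C.e x) n)
        = C.BG.br (C.BG.br m (C.e x)) n - C.BG.br (C.BG.br m n) (C.e x)) ∧
    -- (iii)  [m, n·x] = [m,n]·x - [m·x, n]
    (∀ (m n : G) (x : Ob), C.d0 m = 0 → C.d0 n = 0 →
      C.BG.br m (C.BG.br n (C.e x))
        = C.BG.br (C.BG.br m n) (C.e x) - C.BG.br (C.BG.br m (C.e x)) n) ∧
    -- (iv)  x·(y·m) = [x,y]·m - (x·m)·y
    (∀ (x y : Ob) (m : G), C.d0 m = 0 →
      C.BG.br (C.e x) (C.BG.br (C.e y) m)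
        = C.BG.br (C.e (C.BOb.br x y)) m - C.BG.br (C.BG.br (C.e x) m) (C.e y)) ∧
    -- (v)  x·(m·y) = (x·m)·y - [x,y]·m
    (∀ (x : Ob) (m : G) (y : Ob), C.d0 m = 0 →
      C.BG.br (C.e x) (C.BG.br m (C.e y))
        = C.BG.br (C.BG.br (C.e x) m) (C.e y) - C.BG.br (C.e (C.BOb.br x y)) m) ∧
    -- (vi)  m·[x,y] = (m·x)·y - (m·y)·x
    (∀ (m : G) (x y : Ob), C.d0 m = 0 →
      C.BG.br m (C.e (C.BOb.br x y))
        = C.BG.br (C.BG.br m (C.e x)) (C.e y) - C.BG.br (C.BG.br m (C.e y)) (C.e x)) := by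
  refine ⟨fun x _ hg => C.d0_br_eq_zero_of_right (C.e x) hg,
    fun x _ hg => C.d0_br_eq_zero_of_left (C.e x) hg,
    fun _ _ _ _ _ => C.BG.leibniz _ _ _, fun _ _ _ _ _ => C.BG.leibniz _ _ _,
    fun _ _ _ _ _ => C.BG.leibniz _ _ _, ?_, ?_, ?_⟩
  all_goals intros; rw [C.ebr]; exact C.BG.leibniz _ _ _
end

section
/- Let (L₁, L₀, ∂) be a crossed module of Leibniz algebras. Define on G := L₁ ⋊ L₀ the maps d₀(a,x) = x, d₁(a,x) = ∂(a) + x, ε(x) = (0,x), and composition (b,y) ∘ (a,x) = (b + a, x) whenever y = ∂(a) + x. Then d₀, d₁, ε are Leibniz algebra morphisms, the composition is a Leibniz algebra morphism on the pullback (in particular the interchange law for the bracket holds), and G is an internal groupoid in the category of Leibniz algebras with inverse (a,x)⁻¹ = (-a, ∂(a)+x). -/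
/-- A Leibniz action of a Leibniz algebra `L` on a Leibniz algebra `L'`:
bilinear maps `actl : L × L' → L'` and `actr : L' × L → L'` satisfying the six axioms. -/
structure LeibnizAction (k L L' : Type*) [Field k] [AddCommGroup L] [Module k L]
    [AddCommGroup L'] [Module k L'] (BL : LeibnizBracket k L) (BL' : LeibnizBracket k L') where
  actl : L →ₗ[k] L' →ₗ[k] L'
  actr : L' →ₗ[k] L →ₗ[k] L'
  ax1 : ∀ (x : L) (m n : L'), actl x (BL'.br m n) = BL'.br (actl x m) n - BL'.br (actl x n) m
  ax2 : ∀ (m : L') (x : L) (n : L'), BL'.br m (actl x n) = BL'.br (actr m x) n - actr (BL'.br m n) x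
  ax3 : ∀ (m n : L') (x : L), BL'.br m (actr n x) = actr (BL'.br m n) x - BL'.br (actr m x) n
  ax4 : ∀ (x y : L) (m : L'), actl x (actl y m) = actl (BL.br x y) m - actr (actl x m) y
  ax5 : ∀ (x : L) (m : L') (y : L), actl x (actr m y) = actr (actl x m) y - actl (BL.br x y) m
  ax6 : ∀ (m : L') (x y : L), actr m (BL.br x y) = actr (actr m x) y - actr (actr m y) x

/-- A crossed module of Leibniz algebras: a Leibniz algebra morphism `pa : L1 → L0`
together with a Leibniz action of `L0` on `L1` satisfying (LXM1) and (LXM2). -/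
structure LeibnizCrossedModule (k L1 L0 : Type*) [Field k] [AddCommGroup L1] [Module k L1]
    [AddCommGroup L0] [Module k L0] where
  B1 : LeibnizBracket k L1
  B0 : LeibnizBracket k L0
  act : LeibnizAction k L0 L1 B0 B1
  pa : L1 →ₗ[k] L0
  pabr : ∀ a b, pa (B1.br a b) = B0.br (pa a) (pa b)
  lxm1l : ∀ x a, pa (act.actl x a) = B0.br x (pa a)
  lxm1r : ∀ a x, pa (act.actr a x) = B0.br (pa a) x
  lxm2l : ∀ a b, act.actr a (pa b) = B1.br a b
  lxm2r : ∀ a b, act.actl (pa b) a = B1.br b a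

variable {k L1 L0 : Type*} [Field k] [AddCommGroup L1] [Module k L1]
  [AddCommGroup L0] [Module k L0]

/-- The semidirect-product bracket on `L₁ ⋊ L₀` coming from a crossed module. -/
def sdBr (X : LeibnizCrossedModule k L1 L0) : L1 × L0 → L1 × L0 → L1 × L0 :=
  fun p q => (X.B1.br p.1 q.1 + X.act.actr p.1 q.2 + X.act.actl p.2 q.1, X.B0.br p.2 q.2)

/-- The (total extension of the) groupoid composition on `L₁ ⋊ L₀`:
`(b,y) ∘ (a,x) = (b + a, x)`, meaningful when `y = ∂ a + x`. -/
def sdComp : L1 × L0 → L1 × L0 → L1 × L0 := fun q p => (q.1 + p.1, p.2)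

namespace LeibnizCrossedModule

variable (X : LeibnizCrossedModule k L1 L0)

theorem sdBr_add_left (p q r : L1 × L0) : sdBr X (p + q) r = sdBr X p r + sdBr X q r := by
  simp only [sdBr, Prod.fst_add, Prod.snd_add, map_add, LinearMap.add_apply, Prod.mk_add_mk,
    Prod.mk.injEq]
  exact ⟨by abel, trivial⟩

theorem sdBr_add_right (p q r : L1 × L0) : sdBr X p (q + r) = sdBr X p q + sdBr X p r := by
  simp only [sdBr, Prod.fst_add, Prod.snd_add, map_add, Prod.mk_add_mk, Prod.mk.injEq]
  exact ⟨by abel, trivial⟩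

theorem sdBr_smul_left (c : k) (p q : L1 × L0) : sdBr X (c • p) q = c • sdBr X p q := by
  simp only [sdBr, Prod.smul_fst, Prod.smul_snd, map_smul, LinearMap.smul_apply, Prod.smul_mk,
    smul_add]

theorem sdBr_smul_right (c : k) (p q : L1 × L0) : sdBr X p (c • q) = c • sdBr X p q := by
  simp only [sdBr, Prod.smul_fst, Prod.smul_snd, map_smul, Prod.smul_mk, smul_add]

theorem sdBr_leibniz (p q r : L1 × L0) :
    sdBr X p (sdBr X q r) = sdBr X (sdBr X p q) r - sdBr X (sdBr X p r) q := by
  simp only [sdBr, Prod.mk_sub_mk, Prod.mk.injEq, map_add, LinearMap.add_apply]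
  constructor
  · rw [X.B1.leibniz, X.act.ax1, X.act.ax2 p.1 q.2 r.1, X.act.ax3, X.act.ax4, X.act.ax5,
      X.act.ax6]
    abel
  · exact X.B0.leibniz _ _ _

def semidirectBracket : LeibnizBracket k (L1 × L0) where
  br := LinearMap.mk₂ k (sdBr X) (sdBr_add_left X) (sdBr_smul_left X) (sdBr_add_right X)
    (sdBr_smul_right X)
  leibniz := sdBr_leibniz X

theorem semidirectBracket_br (p q : L1 × L0) : X.semidirectBracket.br p q = sdBr X p q := rfl

/-- The target map `d₁(a, x) = ∂a + x`. -/
def target : L1 × L0 →ₗ[k] L0 := X.pa.coprod LinearMap.id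

theorem target_apply (p : L1 × L0) : X.target p = X.pa p.1 + p.2 := rfl

theorem target_sdBr (p q : L1 × L0) :
    X.target (sdBr X p q) = X.B0.br (X.target p) (X.target q) := by
  simp only [target_apply, sdBr, map_add, X.pabr, X.lxm1l, X.lxm1r, LinearMap.add_apply]
  abel

theorem sdBr_zero_zero (x y : L0) : sdBr X (0, x) (0, y) = ((0 : L1), X.B0.br x y) := by
  simp only [sdBr, map_zero, LinearMap.zero_apply, add_zero]

/-- (LXM2) turns the terms `b·∂a'` and `∂a·b'` produced by the targets `∂a + x`, `∂a' + x'`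
into the cross brackets `[b,a']` and `[a,b']`. -/
theorem sdBr_sdComp {p q p' q' : L1 × L0} (h : q.2 = X.target p) (h' : q'.2 = X.target p') :
    sdBr X (sdComp q p) (sdComp q' p') = sdComp (sdBr X q q') (sdBr X p p') := by
  rw [target_apply] at h h'
  simp only [sdBr, sdComp, h, h', map_add, LinearMap.add_apply, X.lxm2l, X.lxm2r,
    Prod.mk.injEq]
  exact ⟨by abel, trivial⟩

theorem sdBr_snd_eq_target_sdBr {p q p' q' : L1 × L0} (h : q.2 = X.target p)
    (h' : q'.2 = X.target p') : (sdBr X q q').2 = X.target (sdBr X p p') := by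
  rw [X.target_sdBr, ← h, ← h']
  rfl

theorem target_sdComp {p q : L1 × L0} (h : q.2 = X.target p) :
    X.target (sdComp q p) = X.target q := by
  rw [target_apply] at h
  simp only [target_apply, sdComp, map_add, h]
  abel

end LeibnizCrossedModule

section sdComp

variable {A B : Type*} [AddCommGroup A]

theorem sdComp_snd (q p : A × B) : (sdComp q p).2 = p.2 := rfl

theorem sdComp_zero_left (x : B) (p : A × B) : sdComp ((0 : A), x) p = p := by
  simp [sdComp]

theorem sdComp_zero_right (p : A × B) (x : B) : sdComp p ((0 : A), x) = (p.1, x) := by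
  simp [sdComp]

theorem sdComp_assoc (p q r : A × B) : sdComp r (sdComp q p) = sdComp (sdComp r q) p := by
  simp [sdComp, add_assoc]

theorem sdComp_add [Add B] (p q p' q' : A × B) :
    sdComp (q + q') (p + p') = sdComp q p + sdComp q' p' := by
  simp only [sdComp, Prod.fst_add, Prod.snd_add, Prod.mk_add_mk, Prod.mk.injEq]
  exact ⟨by abel, trivial⟩

theorem sdComp_neg_right (a : A) (x y : B) : sdComp (a, x) (-a, y) = ((0 : A), y) := by
  simp [sdComp]

theorem sdComp_neg_left (a : A) (x y : B) : sdComp (-a, y) (a, x) = ((0 : A), x) := by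
  simp [sdComp]

end sdComp

/-- From a crossed module `(L₁, L₀, ∂)` of Leibniz algebras one gets an internal
groupoid structure on `G = L₁ ⋊ L₀`: `d₀(a,x) = x`, `d₁(a,x) = ∂a + x`, `ε x = (0,x)`,
`(b,y)∘(a,x) = (b+a,x)` when `y = ∂a + x`; all structural maps are Leibniz algebra
morphisms (with the interchange law for the bracket), the category axioms hold and
`(a,x)⁻¹ = (-a, ∂a + x)` is a two-sided inverse. -/
theorem crossed_module_gives_internal_groupoid (X : LeibnizCrossedModule k L1 L0) :
    -- `L₁ ⋊ L₀` is a Leibniz algebra with the semidirect bracket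
    (∃ B : LeibnizBracket k (L1 × L0), ∀ p q, B.br p q = sdBr X p q) ∧
    -- `d₀ = snd` preserves the bracket
    (∀ p q : L1 × L0, (sdBr X p q).2 = X.B0.br p.2 q.2) ∧
    -- `d₁(a,x) = ∂a + x` is linear and preserves the bracket
    (∀ p q : L1 × L0, X.pa (p + q).1 + (p + q).2 = (X.pa p.1 + p.2) + (X.pa q.1 + q.2)) ∧
    (∀ (c : k) (p : L1 × L0), X.pa (c • p).1 + (c • p).2 = c • (X.pa p.1 + p.2)) ∧
    (∀ p q : L1 × L0,
      X.pa (sdBr X p q).1 + (sdBr X p q).2 = X.B0.br (X.pa p.1 + p.2) (X.pa q.1 + q.2)) ∧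
    -- `ε x = (0,x)` preserves the bracket
    (∀ x y : L0, ((0 : L1), X.B0.br x y) = sdBr X (0, x) (0, y)) ∧
    -- source and target of a composite
    (∀ p q : L1 × L0, q.2 = X.pa p.1 + p.2 →
      ((sdComp q p).2 = p.2 ∧
       X.pa (sdComp q p).1 + (sdComp q p).2 = X.pa q.1 + q.2)) ∧
    -- identity laws
    (∀ p : L1 × L0, sdComp p ((0 : L1), p.2) = p) ∧
    (∀ p : L1 × L0, sdComp ((0 : L1), X.pa p.1 + p.2) p = p) ∧
    -- associativity
    (∀ p q r : L1 × L0, sdComp r (sdComp q p) = sdComp (sdComp r q) p) ∧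
    -- interchange law for addition
    (∀ p q p' q' : L1 × L0, q.2 = X.pa p.1 + p.2 → q'.2 = X.pa p'.1 + p'.2 →
      sdComp (q + q') (p + p') = sdComp q p + sdComp q' p') ∧
    -- interchange law for the bracket (including composability of the brackets)
    (∀ p q p' q' : L1 × L0, q.2 = X.pa p.1 + p.2 → q'.2 = X.pa p'.1 + p'.2 →
      ((sdBr X q q').2 = X.pa (sdBr X p p').1 + (sdBr X p p').2 ∧
       sdBr X (sdComp q p) (sdComp q' p') = sdComp (sdBr X q q') (sdBr X p p'))) ∧
    -- `(a,x)⁻¹ = (-a, ∂a + x)` is a two-sided inverse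
    (∀ a : L1, ∀ x : L0,
      ((( -a, X.pa a + x) : L1 × L0).2 = X.pa a + x ∧
       X.pa (-a) + (X.pa a + x) = x ∧
       sdComp (a, x) (-a, X.pa a + x) = ((0 : L1), X.pa a + x) ∧
       sdComp (-a, X.pa a + x) (a, x) = ((0 : L1), x))) := by
  refine ⟨⟨X.semidirectBracket, X.semidirectBracket_br⟩, fun _ _ => rfl, map_add X.target,
    map_smul X.target, X.target_sdBr, fun x y => (X.sdBr_zero_zero x y).symm,
    fun p q h => ⟨sdComp_snd q p, X.target_sdComp h⟩, fun p => sdComp_zero_right p p.2,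
    fun p => sdComp_zero_left _ p, sdComp_assoc, fun p q p' q' _ _ => sdComp_add p q p' q',
    fun p q p' q' h h' => ⟨X.sdBr_snd_eq_target_sdBr h h', X.sdBr_sdComp h h'⟩,
    fun a x => ⟨rfl, ?_, sdComp_neg_right a x _, sdComp_neg_left a x _⟩⟩
  rw [map_neg, neg_add_cancel_left]
end

section
/- In the internal groupoid G = L₁ ⋊ L₀ associated to a crossed module (L₁, L₀, ∂) of Leibniz algebras, the interchange law for the bracket holds: if (a',x') ∘ (a,x) and (b',y') ∘ (b,y) are defined (x' = ∂(a)+x, y' = ∂(b)+y), then [(a',x')∘(a,x), (b',y')∘(b,y)] = [(a',x'),(b',y')] ∘ [(a,x),(b,y)]. -/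
variable {k L1 L0 : Type*} [Field k] [AddCommGroup L1] [Module k L1]
  [AddCommGroup L0] [Module k L0]

/-- The target map `t(a, x) = ∂a + x` of the groupoid `L₁ ⋊ L₀`; `q ∘ p` is defined when
`q.2 = t p`. -/
def sdTgt (X : LeibnizCrossedModule k L1 L0) (p : L1 × L0) : L0 := X.pa p.1 + p.2

theorem sdTgt_sdBr (X : LeibnizCrossedModule k L1 L0) (p q : L1 × L0) :
    sdTgt X (sdBr X p q) = X.B0.br (sdTgt X p) (sdTgt X q) := by
  simp only [sdTgt, sdBr, map_add, X.pabr, X.lxm1l, X.lxm1r, LinearMap.add_apply]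
  abel

/-- By (LXM2), `a'·∂b = [a', b]` and `∂a·b' = [a, b']`, which are exactly the cross terms of
`[a' + a, b' + b]` missing from `[(a', ∂a + x), (b', ∂b + y)] + [(a, x), (b, y)]`. -/
theorem sdBr_sdComp (X : LeibnizCrossedModule k L1 L0) (a' b' : L1) (p q : L1 × L0) :
    sdBr X (sdComp (a', sdTgt X p) p) (sdComp (b', sdTgt X q) q)
      = sdComp (sdBr X (a', sdTgt X p) (b', sdTgt X q)) (sdBr X p q) := by
  simp only [sdBr, sdComp, sdTgt, Prod.mk.injEq, map_add, X.lxm2l, X.lxm2r,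
    LinearMap.add_apply, and_true]
  abel

/-- The interchange law for the bracket in the internal groupoid `L₁ ⋊ L₀` of a
crossed module: if `(a',x')∘(a,x)` and `(b',y')∘(b,y)` are defined, then the brackets
are composable and `[(a',x')∘(a,x), (b',y')∘(b,y)] = [(a',x'),(b',y')] ∘ [(a,x),(b,y)]`. -/
theorem sd_bracket_interchange (X : LeibnizCrossedModule k L1 L0)
    (a a' b b' : L1) (x x' y y' : L0)
    (hx : x' = X.pa a + x) (hy : y' = X.pa b + y) :
    (sdBr X (a', x') (b', y')).2 = X.pa (sdBr X (a, x) (b, y)).1 + (sdBr X (a, x) (b, y)).2 ∧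
    sdBr X (sdComp (a', x') (a, x)) (sdComp (b', y') (b, y))
      = sdComp (sdBr X (a', x') (b', y')) (sdBr X (a, x) (b, y)) := by
  subst hx hy
  exact ⟨(sdTgt_sdBr X (a, x) (b, y)).symm, sdBr_sdComp X a' b' (a, x) (b, y)⟩
end

section
/- Let G be an internal groupoid in the category of Leibniz algebras acting on a Leibniz algebra L via ω : L → Ob(G), with action map (g,l) ↦ g•l. Then the action groupoid G ⋉ L, with underlying set {(g,l) : d₀(g) = ω(l)}, componentwise addition and bracket [(g,l),(g',l')] = ([g,g'],[l,l']), object algebra L, d₀(g,l) = l, d₁(g,l) = g•l, ε(l) = (ε(ω(l)), l), and composition (g',l') ∘ (g,l) = (g'∘g, l) when l' = g•l, is an internal groupoid in Leibniz algebras, and the projection q : G ⋉ L → G, (g,l) ↦ g, is a covering morphism. -/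
/-- An action of an internal groupoid `C` (in Leibniz algebras) on a Leibniz algebra
`L` via a Leibniz algebra morphism `w : L → Ob`: a Leibniz algebra morphism
`(g,l) ↦ g • l` defined on the pullback `G ×_{d₀, w} L`, satisfying (A1)–(A3). -/
structure LeibnizGpdAction (k G Ob L : Type*) [Field k] [AddCommGroup G] [Module k G]
    [AddCommGroup Ob] [Module k Ob] [AddCommGroup L] [Module k L]
    (C : LeibnizInternalCat k G Ob) (BL : LeibnizBracket k L) where
  w : L →ₗ[k] Ob
  wbr : ∀ l l', w (BL.br l l') = C.BOb.br (w l) (w l')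
  act : (g : G) → (l : L) → C.d0 g = w l → L
  a1 : ∀ g l h, w (act g l h) = C.d1 g
  a2 : ∀ l (h : C.d0 (C.e (w l)) = w l), act (C.e (w l)) l h = l
  a3 : ∀ h' g l (hc : C.d1 g = C.d0 h') (h1 : C.d0 (C.comp h' g hc) = w l)
    (h2 : C.d0 g = w l) (h3 : C.d0 h' = w (act g l h2)),
    act (C.comp h' g hc) l h1 = act h' (act g l h2) h3
  add_act : ∀ g l g' l' h h' hh, act (g + g') (l + l') hh = act g l h + act g' l' h'
  smul_act : ∀ (c : k) g l h hh, act (c • g) (c • l) hh = c • act g l h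
  br_act : ∀ g l g' l' h h' hh,
    act (C.BG.br g g') (BL.br l l') hh = BL.br (act g l h) (act g' l' h')

/-!
Every clause is inherited from `G` along the projection `(g, l) ↦ g`: the carrier of `G ⋉ L`
is the equaliser of the Leibniz morphisms `d₀ ∘ fst` and `w ∘ snd`, hence a Leibniz
subalgebra of `G × L`; the groupoid laws of `G ⋉ L` are those of `G` together with the
action axioms (A1)–(A3); and a point of the star of `l` is determined by its first component,
its second one being forced to be `l`.
-/

namespace LeibnizInternalCat

variable {k G Ob : Type*} [Field k] [AddCommGroup G] [Module k G] [AddCommGroup Ob]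
  [Module k Ob] (C : LeibnizInternalCat k G Ob)

theorem comp_e_of_d0_eq {g : G} {x : Ob} (hx : C.d0 g = x) (hc : C.d1 (C.e x) = C.d0 g) :
    C.comp g (C.e x) hc = g := by
  subst hx
  exact C.comp_id g hc

theorem e_comp_of_d1_eq {g : G} {x : Ob} (hx : C.d1 g = x) (hc : C.d1 g = C.d0 (C.e x)) :
    C.comp (C.e x) g hc = g := by
  subst hx
  exact C.id_comp g hc

end LeibnizInternalCat

namespace LeibnizGpdAction

variable {k G Ob L : Type*} [Field k] [AddCommGroup G] [Module k G] [AddCommGroup Ob]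
  [Module k Ob] [AddCommGroup L] [Module k L] {C : LeibnizInternalCat k G Ob}
  {BL : LeibnizBracket k L} (A : LeibnizGpdAction k G Ob L C BL)

/-- The carrier `G ×_{d₀, w} L` of the action groupoid `G ⋉ L`. -/
def carrier : Submodule k (G × L) :=
  LinearMap.eqLocus (C.d0 ∘ₗ LinearMap.fst k G L) (A.w ∘ₗ LinearMap.snd k G L)

theorem mem_carrier {p : G × L} : p ∈ A.carrier ↔ C.d0 p.1 = A.w p.2 := Iff.rfl

theorem br_mem_carrier {p q : G × L} (hp : p ∈ A.carrier) (hq : q ∈ A.carrier) :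
    (C.BG.br p.1 q.1, BL.br p.2 q.2) ∈ A.carrier := by
  rw [mem_carrier] at *
  rw [C.d0br, A.wbr, hp, hq]

theorem d0_comp_eq {g g' : G} {l : L} (hp : C.d0 g = A.w l) (hc : C.d1 g = C.d0 g') :
    C.d0 (C.comp g' g hc) = A.w l :=
  (C.d0comp g' g hc).trans hp

theorem act_comp {g g' : G} {l l' : L} (hp : C.d0 g = A.w l) (hq : C.d0 g' = A.w l')
    (hl : l' = A.act g l hp) (hc : C.d1 g = C.d0 g') (hm : C.d0 (C.comp g' g hc) = A.w l) :
    A.act (C.comp g' g hc) l hm = A.act g' l' hq := by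
  subst hl
  exact A.a3 g' g l hc hm hp hq

/-- The projection `q : G ⋉ L → G` restricted to the star of the object `l`. -/
def starEquiv (l : L) :
    {p : G × L // C.d0 p.1 = A.w p.2 ∧ p.2 = l} ≃ {g : G // C.d0 g = A.w l} where
  toFun p := ⟨p.1.1, p.2.1.trans (congrArg A.w p.2.2)⟩
  invFun g := ⟨(g.1, l), g.2, rfl⟩
  left_inv := by
    rintro ⟨⟨g, m⟩, -, rfl⟩
    rfl
  right_inv _ := rfl

end LeibnizGpdAction

/-- The action groupoid `G ⋉ L` of an internal groupoid action on a Leibniz algebra: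
its carrier `{(g,l) : d₀ g = w l}` is closed under the componentwise operations and
bracket, the structural maps `d₀(g,l) = l`, `d₁(g,l) = g•l`, `ε l = (ε(w l), l)`,
`(g',l') ∘ (g,l) = (g'∘g, l)` make it an internal groupoid in Leibniz algebras, and
the projection `q(g,l) = g` is a covering morphism. -/
theorem action_groupoid_is_covering (k G Ob L : Type*) [Field k]
    [AddCommGroup G] [Module k G] [AddCommGroup Ob] [Module k Ob]
    [AddCommGroup L] [Module k L]
    (C : LeibnizInternalCat k G Ob) (BL : LeibnizBracket k L)
    (A : LeibnizGpdAction k G Ob L C BL) :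
    -- the carrier of `G ⋉ L` is closed under `+`, `•` and the componentwise bracket
    (∀ p q : G × L, C.d0 p.1 = A.w p.2 → C.d0 q.1 = A.w q.2 →
      C.d0 (p + q).1 = A.w (p + q).2) ∧
    (∀ (c : k) (p : G × L), C.d0 p.1 = A.w p.2 → C.d0 (c • p).1 = A.w (c • p).2) ∧
    (∀ p q : G × L, C.d0 p.1 = A.w p.2 → C.d0 q.1 = A.w q.2 →
      C.d0 (C.BG.br p.1 q.1) = A.w (BL.br p.2 q.2)) ∧
    -- `ε' l = (ε (w l), l)` lands in `G ⋉ L`, with `d₀' (ε' l) = l` and `d₁' (ε' l) = l`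
    (∀ l : L, C.d0 (C.e (A.w l)) = A.w l) ∧
    (∀ l (h : C.d0 (C.e (A.w l)) = A.w l), A.act (C.e (A.w l)) l h = l) ∧
    -- composition: `(g',l') ∘ (g,l) = (g' ∘ g, l)` stays in `G ⋉ L`;
    -- its source is `l` and its target is `d₁'(g',l') = g' • l'`
    (∀ (g g' : G) (l l' : L) (hp : C.d0 g = A.w l) (hq : C.d0 g' = A.w l')
      (hl : l' = A.act g l hp) (hc : C.d1 g = C.d0 g'),
      C.d0 (C.comp g' g hc) = A.w l ∧
      ∀ hm : C.d0 (C.comp g' g hc) = A.w l,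
        A.act (C.comp g' g hc) l hm = A.act g' l' hq) ∧
    -- identity laws for the action groupoid
    (∀ (g : G) (l : L) (hp : C.d0 g = A.w l) (hc : C.d1 (C.e (A.w l)) = C.d0 g),
      C.comp g (C.e (A.w l)) hc = g) ∧
    (∀ (g : G) (l : L) (hp : C.d0 g = A.w l)
      (hc : C.d1 g = C.d0 (C.e (A.w (A.act g l hp)))),
      C.comp (C.e (A.w (A.act g l hp))) g hc = g) ∧
    -- the projection `q : G ⋉ L → G, (g,l) ↦ g` is a covering morphism:
    -- for each object `l` it restricts to a bijection `St_{G⋉L}(l) → St_G(w l)`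
    (∀ l : L, Function.Bijective
      (fun p : {p : G × L // C.d0 p.1 = A.w p.2 ∧ p.2 = l} =>
        (⟨p.1.1, p.2.1.trans (congrArg A.w p.2.2)⟩ : {g : G // C.d0 g = A.w l}))) :=
  ⟨fun _ _ hp hq => A.carrier.add_mem hp hq,
    fun c _ hp => A.carrier.smul_mem c hp,
    fun _ _ hp hq => A.br_mem_carrier hp hq,
    fun l => C.d0e (A.w l),
    A.a2,
    fun _ _ _ _ hp hq hl hc => ⟨A.d0_comp_eq hp hc, A.act_comp hp hq hl hc⟩,
    fun _ _ hp hc => C.comp_e_of_d0_eq hp hc,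
    fun g l hp hc => C.e_comp_of_d1_eq (A.a1 g l hp).symm hc,
    fun l => (A.starEquiv l).bijective⟩
end
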